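/- arXiv:2311.15255 — 5 statements merged into one kernel-verified Lean document; each statement's English description precedes it below -/
import Mathlib

section
/- Let F be a finite field and n a positive integer. Then the independence number of the unitary Cayley graph Γ(M_n(F)) of the ring of n×n matrices over F equals |F|^(n²−n). -/
/-!
Matrices whose first row vanishes have singular differences, so they form an independent set of
size `q ^ (n² - n)`. Conversely, the regular representation of the degree-`n` extension `E` of `F`
embeds `E` in `Mₙ(F)`, and all nonzero differences of its image are units. Hence for an
independent set `A` the sums `a + x` with `a ∈ A`, `x ∈ E` are pairwise distinct, and
`|A| · q ^ n ≤ q ^ (n²)`.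
-/

open Pointwise

/-- The unitary Cayley graph of a ring `R`: vertices are elements of `R`,
and `x`, `y` are adjacent iff `x - y` is a unit. -/
def unitaryCayley (R : Type*) [Ring R] : SimpleGraph R where
  Adj x y := x ≠ y ∧ IsUnit (x - y)
  symm := by
    constructor
    rintro x y ⟨hne, hu⟩
    exact ⟨hne.symm, by simpa [neg_sub] using hu.neg⟩
  loopless := by constructor; rintro x ⟨h, -⟩; exact h rfl

/-- A set of vertices is independent if its elements are pairwise nonadjacent. -/
def IsIndepSet {V : Type*} (G : SimpleGraph V) (A : Set V) : Prop :=
  A.Pairwise fun x y => ¬ G.Adj x y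

/-- A maximal independent set. -/
def IsMaxIndepSet {V : Type*} (G : SimpleGraph V) (A : Set V) : Prop :=
  IsIndepSet G A ∧ ∀ B : Set V, IsIndepSet G B → A ⊆ B → A = B

/-- A graph is well-covered if all its maximal independent sets have the same cardinality. -/
def WellCovered {V : Type*} (G : SimpleGraph V) : Prop :=
  ∀ A B : Set V, IsMaxIndepSet G A → IsMaxIndepSet G B → A.ncard = B.ncard

/-- The reduced `k`-diagonal matrix `D_k(a)`:  the `(i, j)` entry is `a (i - k)`
when `j = i + k` (mod `n`) and `i ≠ k`, and `0` otherwise. -/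
def Dmat {n : ℕ} (F : Type*) [Field F] (k : Fin n) (a : Fin n → F) :
    Matrix (Fin n) (Fin n) F :=
  Matrix.of fun i j => if i ≠ k ∧ j = i + k then a (i - k) else 0

/-- The family `𝒟` of all reduced diagonal matrices `D_k(a₁, …, a_{n-1})`. -/
def DSet {n : ℕ} (F : Type*) [Field F] : Set (Matrix (Fin n) (Fin n) F) :=
  {M | ∃ (k : Fin n) (a : Fin n → F), M = Dmat F k a}

/-- The Jacobson radical of a (possibly noncommutative) ring, as a two-sided ideal. -/
noncomputable def jacRad (R : Type*) [Ring R] : TwoSidedIdeal R :=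
  (⊥ : TwoSidedIdeal R).jacobson

/-- The quotient of `R` by its Jacobson radical. -/
abbrev JacQuot (R : Type*) [Ring R] := (jacRad R).ringCon.Quotient

/-- The quotient map `R → R/J(R)`. -/
noncomputable def jacMk (R : Type*) [Ring R] : R →+* JacQuot R := (jacRad R).ringCon.mk'

theorem Matrix.isIndepSet_setOf_row_eq_zero {m R : Type*} [Fintype m] [DecidableEq m]
    [CommRing R] [Nontrivial R] (i : m) :
    IsIndepSet (unitaryCayley (Matrix m m R)) {M | M i = 0} := by
  rintro M (hM : M i = 0) N (hN : N i = 0) - ⟨-, hunit⟩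
  have hdet : (M - N).det = 0 :=
    Matrix.det_eq_zero_of_row_eq_zero i fun j ↦ by simp [hM, hN]
  exact not_isUnit_zero (hdet ▸ (Matrix.isUnit_iff_isUnit_det _).mp hunit)

theorem Matrix.ncard_setOf_row_eq_zero {m n α : Type*} [Fintype m] [DecidableEq m] [Fintype n]
    [Zero α] [Finite α] (i : m) :
    {M : Matrix m n α | M i = 0}.ncard =
      Nat.card α ^ ((Fintype.card m - 1) * Fintype.card n) := by
  let e :
      {M : Matrix m n α // M i = 0} ≃ {v : n → α // v = 0} × ({j // j ≠ i} → n → α) :=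
    ((Equiv.piSplitAt i fun _ ↦ n → α).subtypeEquiv (p := fun M : m → n → α ↦ M i = 0)
      (q := fun p ↦ p.1 = 0) fun _ ↦ Iff.rfl).trans
      (Equiv.prodSubtypeFstEquivSubtypeProd (α := n → α) (β := {j // j ≠ i} → n → α)
        (p := fun v ↦ v = 0))
  rw [← Nat.card_coe_set_eq]
  refine (Nat.card_congr e).trans ?_
  simp [Nat.card_pi, ← pow_mul, mul_comm]

theorem IsIndepSet.ncard_mul_card_le {R E : Type*} [Ring R] [Finite R] [Nontrivial R]
    [DivisionRing E] (φ : E →+* R) {A : Set R}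
    (hA : IsIndepSet (unitaryCayley R) A) :
    A.ncard * Nat.card E ≤ Nat.card R := by
  have : Finite E := Finite.of_injective φ φ.injective
  rw [← Nat.card_coe_set_eq, ← Nat.card_prod]
  refine Nat.card_le_card_of_injective (fun p : A × E ↦ (p.1 : R) + φ p.2) ?_
  rintro ⟨⟨a, ha⟩, x⟩ ⟨⟨a', ha'⟩, x'⟩ h
  have hdiff : a - a' = φ (x' - x) := by
    rw [map_sub, sub_eq_sub_iff_add_eq_add]; exact h.trans (add_comm _ _)
  obtain rfl | hx := eq_or_ne x x'
  · rw [sub_self, map_zero, sub_eq_zero] at hdiff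
    subst hdiff; rfl
  · have hunit : IsUnit (a - a') :=
      hdiff ▸ (isUnit_iff_ne_zero.mpr (sub_ne_zero.mpr hx.symm)).map φ
    have hne : a ≠ a' := sub_ne_zero.mp hunit.ne_zero
    exact absurd ⟨hne, hunit⟩ (hA ha ha' hne)

theorem stmt0 (F : Type*) [Field F] [Fintype F] (n : ℕ) (hn : 0 < n) :
    IsGreatest {m : ℕ | ∃ A : Set (Matrix (Fin n) (Fin n) F),
        IsIndepSet (unitaryCayley (Matrix (Fin n) (Fin n) F)) A ∧ A.ncard = m}
      (Fintype.card F ^ (n ^ 2 - n)) := by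
  have : NeZero n := ⟨hn.ne'⟩
  have : Fact (ringChar F).Prime := ⟨CharP.char_is_prime F _⟩
  have hexp : n ^ 2 - n = (n - 1) * n := by rw [Nat.sub_one_mul, sq]
  refine ⟨⟨{M | M 0 = 0}, Matrix.isIndepSet_setOf_row_eq_zero 0, ?_⟩, ?_⟩
  · rw [Matrix.ncard_setOf_row_eq_zero, Fintype.card_fin, Nat.card_eq_fintype_card, hexp]
  rintro _ ⟨A, hA, rfl⟩
  let E := FiniteField.Extension F (ringChar F) n
  let b := Module.finBasisOfFinrankEq F E (FiniteField.finrank_extension F _ n)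
  have hbound := hA.ncard_mul_card_le (Algebra.leftMulMatrix b).toRingHom
  have hM : Nat.card (Matrix (Fin n) (Fin n) F) = Nat.card F ^ (n ^ 2 - n) * Nat.card F ^ n := by
    rw [← pow_add, Nat.sub_add_cancel (Nat.le_self_pow two_ne_zero n), sq]
    simp [Matrix, ← pow_mul]
  rw [FiniteField.natCard_extension, hM] at hbound
  rw [Fintype.card_eq_nat_card]
  exact Nat.le_of_mul_le_mul_right hbound (pow_pos Nat.card_pos n)
end

section
/- Let F be a finite field and n a positive integer. Then the set 𝒟 = { D_k(a_1,…,a_{n−1}) : 1 ≤ k ≤ n, a_1,…,a_{n−1} ∈ F } is an independent set of the unitary Cayley graph Γ(M_n(F)), i.e., for any two distinct matrices D, D' in 𝒟 the difference D − D' is a singular matrix. -/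
open Pointwise

namespace Matrix

variable {n R : Type*} [Fintype n] [DecidableEq n] [CommRing R]

theorem det_eq_zero_of_rows_supported_on_column {M : Matrix n n R} {i i' : n} (hii' : i ≠ i')
    (c : n) (hi : ∀ j ≠ c, M i j = 0) (hi' : ∀ j ≠ c, M i' j = 0) : M.det = 0 := by
  rw [← det_transpose, det_apply]
  refine Finset.sum_eq_zero fun σ _ => ?_
  -- `σ` is injective, so it cannot send both `i` and `i'` to `c`.
  obtain ⟨r, hr⟩ : ∃ r, σ r ≠ c ∧ ∀ j ≠ c, M r j = 0 := by
    by_cases hσ : σ i = c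
    · exact ⟨i', fun h => hii' (σ.injective (hσ.trans h.symm)), hi'⟩
    · exact ⟨i, hσ, hi⟩
  rw [Finset.prod_eq_zero (Finset.mem_univ r) (hr.2 (σ r) hr.1), smul_zero]

end Matrix

section Dmat

variable {n : ℕ} {F : Type*} [Field F]

theorem Dmat_apply_self (k : Fin n) (a : Fin n → F) (j : Fin n) : Dmat F k a k j = 0 :=
  if_neg fun h => h.1 rfl

theorem Dmat_apply_of_ne_add {k i j : Fin n} (a : Fin n → F) (hj : j ≠ i + k) :
    Dmat F k a i j = 0 :=
  if_neg fun h => hj h.2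

theorem det_Dmat_sub_Dmat (k k' : Fin n) (a b : Fin n → F) :
    (Dmat F k a - Dmat F k' b).det = 0 := by
  by_cases hkk' : k = k'
  · subst hkk'
    exact Matrix.det_eq_zero_of_row_eq_zero k fun j => by
      simp only [Matrix.sub_apply, Dmat_apply_self, sub_zero]
  -- Rows `k` and `k'` of the difference are both supported on column `k + k'`.
  refine Matrix.det_eq_zero_of_rows_supported_on_column hkk' (k + k') (fun j hj => ?_)
    fun j hj => ?_
  · rw [Matrix.sub_apply, Dmat_apply_self, Dmat_apply_of_ne_add b hj, sub_zero]
  · rw [Matrix.sub_apply, Dmat_apply_self, Dmat_apply_of_ne_add a (add_comm k' k ▸ hj), sub_zero]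

end Dmat

theorem stmt3_general (F : Type*) [Field F] (n : ℕ) :
    IsIndepSet (unitaryCayley (Matrix (Fin n) (Fin n) F)) (DSet F) ∧
      ∀ D ∈ DSet (n := n) F, ∀ D' ∈ DSet (n := n) F, D ≠ D' →
        ¬ IsUnit (D - D') := by
  have hsingular : ∀ D ∈ DSet (n := n) F, ∀ D' ∈ DSet (n := n) F, ¬ IsUnit (D - D') := by
    rintro _ ⟨k, a, rfl⟩ _ ⟨k', b, rfl⟩
    rw [Matrix.isUnit_iff_isUnit_det, det_Dmat_sub_Dmat]
    exact not_isUnit_zero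
  exact ⟨fun D hD D' hD' _ hadj => hsingular D hD D' hD' hadj.2,
    fun D hD D' hD' _ => hsingular D hD D' hD'⟩

theorem stmt3 (F : Type*) [Field F] [Fintype F] (n : ℕ) (hn : 0 < n) :
    IsIndepSet (unitaryCayley (Matrix (Fin n) (Fin n) F)) (DSet F) ∧
      ∀ D ∈ DSet (n := n) F, ∀ D' ∈ DSet (n := n) F, D ≠ D' →
        ¬ IsUnit (D - D') :=
  stmt3_general F n
end

section
/- Let F be a finite field, n a positive integer, and let M be a maximal independent set of the unitary Cayley graph Γ(M_n(F)) containing the set 𝒟 = { D_k(a_1,…,a_{n−1}) : 1 ≤ k ≤ n, a_1,…,a_{n−1} ∈ F }. Then every matrix A ∈ M satisfies A_{k, 2k} = 0 for each 1 ≤ k ≤ n, where the column index 2k is computed modulo n (with residue 0 replaced by n). -/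
/-!
If `A k (k + k) ≠ 0`, some `D_k(a)` is adjacent to `A`, contradicting the independence of `M`.
Shifting the columns by `k` turns `A - D_k(a)` into `C + diag d` with `C k k = A k (k + k)` and
`d` an arbitrary vector vanishing at `k`. The determinant of `C + diag d` is affine in each `d j`,
with slope the complementary principal minor, so the `d j` for `j ≠ k` can be chosen one index at
a time, by induction on the size, starting from the `1 × 1` minor `C k k`.
-/

open Pointwise

namespace Matrix

theorem det_add_diagonal_single {R : Type*} [CommRing R] {n : ℕ}
    (B : Matrix (Fin (n + 1)) (Fin (n + 1)) R) (j : Fin (n + 1)) (x : R) :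
    (B + diagonal (Pi.single j x)).det = B.det + x * (B.submatrix j.succAbove j.succAbove).det := by
  have hrow : B + diagonal (Pi.single j x) = B.updateRow j (B j + x • Pi.single j 1) := by
    ext i l
    by_cases hi : i = j
    · subst hi
      by_cases hl : i = l <;> simp [hl, eq_comm]
    · simp [diagonal_apply, hi]
  rw [hrow, det_updateRow_add, det_updateRow_smul, updateRow_eq_self, ← adjugate_apply,
    adjugate_fin_succ_eq_det_submatrix, Even.neg_one_pow ⟨j, rfl⟩, one_mul]

theorem exists_det_add_diagonal_ne_zero {F : Type*} [Field F] {n : ℕ}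
    (C : Matrix (Fin (n + 1)) (Fin (n + 1)) F) (k : Fin (n + 1)) (hk : C k k ≠ 0) :
    ∃ d : Fin (n + 1) → F, d k = 0 ∧ (C + diagonal d).det ≠ 0 := by
  induction n with
  | zero => exact ⟨0, rfl, by simpa [det_fin_one, Fin.fin_one_eq_zero k] using hk⟩
  | succ n ih =>
    obtain ⟨j, hjk⟩ := exists_ne k
    obtain ⟨k', rfl⟩ := Fin.exists_succAbove_eq hjk.symm
    obtain ⟨d', hd'k', hd'⟩ := ih (C.submatrix j.succAbove j.succAbove) k' hk
    have hminor (x : F) : (C + diagonal (j.insertNth x d')).submatrix j.succAbove j.succAbove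
        = C.submatrix j.succAbove j.succAbove + diagonal d' := by
      ext s t
      by_cases hst : s = t <;> simp [hst]
    have hdet (x : F) : (C + diagonal (j.insertNth x d')).det =
        (C + diagonal (j.insertNth 0 d')).det +
          x * (C.submatrix j.succAbove j.succAbove + diagonal d').det := by
      have hsplit : C + diagonal (j.insertNth x d') =
          C + diagonal (j.insertNth 0 d') + diagonal (Pi.single j x) := by
        rw [add_assoc C, diagonal_add]
        congr 2
        ext i
        cases i using j.succAboveCases <;> simp
      rw [hsplit, det_add_diagonal_single, hminor]
    set c := (C + diagonal (j.insertNth 0 d')).det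
    refine ⟨j.insertNth ((1 - c) / (C.submatrix j.succAbove j.succAbove + diagonal d').det) d',
      by simpa using hd'k', ?_⟩
    rw [hdet, div_mul_cancel₀ _ hd']
    simp

end Matrix

theorem Dmat_eq_diagonal_submatrix {F : Type*} [Field F] {n : ℕ} [NeZero n] (k : Fin n)
    (d : Fin n → F) (hdk : d k = 0) :
    Dmat F k (fun t => d (t + k)) = (Matrix.diagonal d).submatrix id (Equiv.subRight k) := by
  ext i j
  by_cases hij : j = i + k
  · subst hij
    by_cases hik : i = k
    · simp [Dmat, hik, hdk]
    · simp [Dmat, hik]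
  · have : i ≠ j - k := fun h => hij (by rw [h, sub_add_cancel])
    simp [Dmat, hij, Matrix.diagonal_apply_ne _ this]

theorem exists_isUnit_sub_Dmat {F : Type*} [Field F] {n : ℕ} (A : Matrix (Fin n) (Fin n) F)
    (k : Fin n) (hA : A k (k + k) ≠ 0) : ∃ a, IsUnit (A - Dmat F k a) := by
  cases n with
  | zero => exact k.elim0
  | succ n =>
    obtain ⟨d, hdk, hdet⟩ :=
      (A.submatrix id (Equiv.addRight k)).exists_det_add_diagonal_ne_zero k hA
    refine ⟨fun t => (-d) (t + k), ?_⟩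
    have hshift : A - Dmat F k (fun t => (-d) (t + k)) =
        (A.submatrix id (Equiv.addRight k) + Matrix.diagonal d).submatrix (Equiv.refl _)
          (Equiv.subRight k) := by
      rw [Dmat_eq_diagonal_submatrix k (-d) (by simp [hdk])]
      ext i j
      by_cases h : i = j - k <;> simp [h]
    rw [hshift, Matrix.isUnit_submatrix_equiv, Matrix.isUnit_iff_isUnit_det]
    exact hdet.isUnit

theorem stmt5_general (F : Type*) [Field F] (n : ℕ)
    (M : Set (Matrix (Fin n) (Fin n) F))
    (hM : IsMaxIndepSet (unitaryCayley (Matrix (Fin n) (Fin n) F)) M)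
    (hD : DSet F ⊆ M)
    (A : Matrix (Fin n) (Fin n) F) (hA : A ∈ M) (k : Fin n) :
    A k (k + k) = 0 := by
  by_contra hAk
  obtain ⟨a, hunit⟩ := exists_isUnit_sub_Dmat A k hAk
  have hne : A ≠ Dmat F k a := fun h => hAk (by simp [h, Dmat])
  exact hM.1 hA (hD ⟨k, a, rfl⟩) hne ⟨hne, hunit⟩

theorem stmt5 (F : Type*) [Field F] [Fintype F] (n : ℕ) (hn : 0 < n)
    (M : Set (Matrix (Fin n) (Fin n) F))
    (hM : IsMaxIndepSet (unitaryCayley (Matrix (Fin n) (Fin n) F)) M)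
    (hD : DSet F ⊆ M)
    (A : Matrix (Fin n) (Fin n) F) (hA : A ∈ M) (k : Fin n) :
    A k (k + k) = 0 :=
  stmt5_general F n M hM hD A hA k
end

section
/- Let R be a finite ring with identity, J(R) its Jacobson radical, and A a subset of R; let Ā denote the image of A in R/J(R) under the quotient map. Then A is a maximal independent set of the unitary Cayley graph Γ(R) if and only if Ā is a maximal independent set of Γ(R/J(R)) and A = A + J(R) (i.e., A is a union of cosets of J(R)). -/
open Pointwise

/-!
Modulo the Jacobson radical `J`, an element is a unit iff its image is (an inverse mod `J`
gives `bx, xb ∈ 1 + J`, and `1 + J` consists of units). Hence `Γ(R)` is the pullback of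
`Γ(R/J)` along the quotient map, and for the pullback of any graph along a surjection the
maximal independent sets are exactly the full preimages of maximal independent sets.
-/

section Comap

variable {V W : Type*} {H : SimpleGraph W} {f : V → W}

theorem isIndepSet_comap_iff {A : Set V} : IsIndepSet (H.comap f) A ↔ IsIndepSet H (f '' A) := by
  constructor
  · rintro hA - ⟨x, hx, rfl⟩ - ⟨y, hy, rfl⟩ hne
    exact hA hx hy (ne_of_apply_ne f hne)
  · intro hA x hx y hy _ hadj
    exact hA (Set.mem_image_of_mem f hx) (Set.mem_image_of_mem f hy) (H.ne_of_adj hadj) hadj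

theorem IsMaxIndepSet.preimage_image_eq {A : Set V} (hA : IsMaxIndepSet (H.comap f) A) :
    f ⁻¹' (f '' A) = A := by
  refine (hA.2 _ ?_ (Set.subset_preimage_image f A)).symm
  rw [isIndepSet_comap_iff, Set.image_preimage_eq_of_subset (Set.image_subset_range f A)]
  exact isIndepSet_comap_iff.mp hA.1

theorem isMaxIndepSet_comap_iff (hf : Function.Surjective f) {A : Set V} :
    IsMaxIndepSet (H.comap f) A ↔ IsMaxIndepSet H (f '' A) ∧ f ⁻¹' (f '' A) = A := by
  constructor
  · intro hA
    refine ⟨⟨isIndepSet_comap_iff.mp hA.1, fun B hB hAB => ?_⟩, hA.preimage_image_eq⟩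
    have hB' : IsIndepSet (H.comap f) (f ⁻¹' B) := by
      rwa [isIndepSet_comap_iff, Set.image_preimage_eq B hf]
    rw [hA.2 _ hB' (Set.image_subset_iff.mp hAB), Set.image_preimage_eq B hf]
  · rintro ⟨⟨hA, hAmax⟩, hsat⟩
    refine ⟨isIndepSet_comap_iff.mpr hA, fun B hB hAB => hAB.antisymm ?_⟩
    have himage := hAmax _ (isIndepSet_comap_iff.mp hB) (Set.image_mono hAB)
    rw [← hsat, himage]
    exact Set.subset_preimage_image f B

end Comap

namespace TwoSidedIdeal

variable {R : Type*} [Ring R]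

theorem ringCon_mk'_surjective (I : TwoSidedIdeal R) : Function.Surjective I.ringCon.mk' :=
  fun x => Quotient.inductionOn' x fun a => ⟨a, rfl⟩

theorem ringCon_mk'_eq_iff (I : TwoSidedIdeal R) {x y : R} :
    I.ringCon.mk' x = I.ringCon.mk' y ↔ x - y ∈ I :=
  I.ringCon.eq.trans (I.rel_iff x y)

theorem preimage_image_ringCon_mk' (I : TwoSidedIdeal R) (A : Set R) :
    I.ringCon.mk' ⁻¹' (I.ringCon.mk' '' A) = A + (I : Set R) := by
  ext x
  simp only [Set.mem_preimage, Set.mem_image, Set.mem_add, SetLike.mem_coe, ringCon_mk'_eq_iff]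
  constructor
  · rintro ⟨a, ha, hax⟩
    exact ⟨a, ha, x - a, by simpa using I.neg_mem hax, add_sub_cancel a x⟩
  · rintro ⟨a, ha, j, hj, rfl⟩
    exact ⟨a, ha, by simpa using I.neg_mem hj⟩

theorem isUnit_one_add_of_mem_jacobson_bot {j : R} (hj : j ∈ (⊥ : TwoSidedIdeal R).jacobson) :
    IsUnit (1 + j) := by
  have left_inv : ∀ k ∈ (⊥ : TwoSidedIdeal R).jacobson, ∃ z, z * (1 + k) = 1 := by
    intro k hk
    obtain ⟨z, hz⟩ := mem_jacobson_iff.mp hk 1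
    exact ⟨z, by rw [mem_bot] at hz; rw [← sub_eq_zero, ← hz]; noncomm_ring⟩
  obtain ⟨z, hz⟩ := left_inv j hj
  -- `z = 1 - z * j` is itself in `1 + J`, so it has a left inverse `w`, which must be `1 + j`.
  have hz' : z = 1 + -(z * j) := by rw [← sub_eq_add_neg, ← hz]; noncomm_ring
  obtain ⟨w, hw⟩ := left_inv _ (neg_mem _ (mul_mem_left _ z j hj))
  rw [← hz'] at hw
  have hw_eq : w = 1 + j := by
    calc w = w * (z * (1 + j)) := by rw [hz, mul_one]
      _ = 1 + j := by rw [← mul_assoc, hw, one_mul]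
  exact ⟨⟨1 + j, z, hw_eq ▸ hw, hz⟩, rfl⟩

theorem not_isUnit_of_mem_jacobson_bot [Nontrivial R] {j : R}
    (hj : j ∈ (⊥ : TwoSidedIdeal R).jacobson) : ¬IsUnit j := by
  rintro ⟨u, rfl⟩
  have hone : (1 : R) ∈ (⊥ : TwoSidedIdeal R).jacobson := by
    simpa using mul_mem_right _ _ (↑u⁻¹ : R) hj
  simpa using isUnit_one_add_of_mem_jacobson_bot (neg_mem _ hone)

end TwoSidedIdeal

section JacobsonQuotient

variable (R : Type*) [Ring R]

theorem jacMk_surjective : Function.Surjective (jacMk R) :=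
  (jacRad R).ringCon_mk'_surjective

variable {R} in
theorem isUnit_of_jacMk_eq_one {y : R} (hy : jacMk R y = 1) : IsUnit y := by
  have hmem : y - 1 ∈ jacRad R := ((jacRad R).ringCon_mk'_eq_iff).mp (hy.trans (map_one _).symm)
  simpa using TwoSidedIdeal.isUnit_one_add_of_mem_jacobson_bot hmem

instance : IsLocalHom (jacMk R) := by
  refine ⟨fun x ⟨u, hu⟩ => ?_⟩
  obtain ⟨b, hb⟩ := jacMk_surjective R ↑u⁻¹
  obtain ⟨v, hv⟩ := isUnit_of_jacMk_eq_one (y := b * x) <| by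
    rw [map_mul, hb, ← hu, Units.inv_mul]
  obtain ⟨w, hw⟩ := isUnit_of_jacMk_eq_one (y := x * b) <| by
    rw [map_mul, hb, ← hu, Units.mul_inv]
  refine isUnit_iff_exists_and_exists.mpr ⟨⟨b * ↑w⁻¹, ?_⟩, ⟨↑v⁻¹ * b, ?_⟩⟩
  · rw [← mul_assoc, ← hw, Units.mul_inv]
  · rw [mul_assoc, ← hv, Units.inv_mul]

theorem unitaryCayley_eq_comap_jacMk :
    unitaryCayley R = (unitaryCayley (JacQuot R)).comap (jacMk R) := by
  ext x y
  simp only [SimpleGraph.comap_adj, unitaryCayley, ← map_sub, isUnit_map_iff]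
  refine and_congr_left fun hunit => ⟨fun hne heq => ?_, ne_of_apply_ne _⟩
  have : Nontrivial R := nontrivial_of_ne x y hne
  exact TwoSidedIdeal.not_isUnit_of_mem_jacobson_bot
    (((jacRad R).ringCon_mk'_eq_iff).mp heq) hunit

end JacobsonQuotient

theorem stmt7_general (R : Type*) [Ring R] (A : Set R) :
    IsMaxIndepSet (unitaryCayley R) A ↔
      (IsMaxIndepSet (unitaryCayley (JacQuot R)) (jacMk R '' A) ∧
        A = A + (jacRad R : Set R)) := by
  rw [unitaryCayley_eq_comap_jacMk, isMaxIndepSet_comap_iff (jacMk_surjective R), jacMk,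
    TwoSidedIdeal.preimage_image_ringCon_mk', eq_comm]

theorem stmt7 (R : Type*) [Ring R] [Finite R] (A : Set R) :
    IsMaxIndepSet (unitaryCayley R) A ↔
      (IsMaxIndepSet (unitaryCayley (JacQuot R)) (jacMk R '' A) ∧
        A = A + (jacRad R : Set R)) :=
  stmt7_general R A
end

section
/- Let F be a finite field and n ≥ 2 an integer. Let ℱ be the set of all matrices in M_n(F) whose first row is zero, and let M ∈ ℱ. Then every independent set of the unitary Cayley graph Γ(M_n(F)) that contains ℱ ∖ {M} is contained in ℱ; in particular, ℱ is the unique maximal independent set of Γ(M_n(F)) containing ℱ ∖ {M}. -/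
open Pointwise

/-! A matrix with zero first row is singular, so `ℱ` is independent. If the first row `r` of `B`
is nonzero, there are two distinct invertible matrices `C` with first row `r` (complete `r` to an
invertible matrix, then add its first row to its second). Each `B - C` lies in `ℱ` and is adjacent
to `B`, and at most one of them is `M`; so `B` cannot join an independent set containing `ℱ ∖ {M}`. -/

namespace Matrix

variable {n : Type*} [Fintype n] [DecidableEq n]

theorem not_isUnit_of_row_eq_zero {R : Type*} [CommRing R] [Nontrivial R] {A : Matrix n n R}
    (i : n) (h : ∀ j, A i j = 0) : ¬IsUnit A := by
  rw [isUnit_iff_isUnit_det, det_eq_zero_of_row_eq_zero i h]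
  exact not_isUnit_zero

theorem det_one_updateRow {R : Type*} [CommRing R] (i : n) (r : n → R) :
    ((1 : Matrix n n R).updateRow i r).det = r i := by
  have hr : r = ∑ k, r k • (1 : Matrix n n R) k := by
    ext j
    simp [one_apply]
  rw [hr, det_updateRow_sum, det_one, smul_eq_mul, mul_one]
  simp [one_apply]

variable {K : Type*} [Field K]

theorem exists_isUnit_row_eq (i : n) {r : n → K} (hr : r ≠ 0) :
    ∃ C : Matrix n n K, IsUnit C ∧ C i = r := by
  obtain ⟨j, hj⟩ := Function.ne_iff.mp hr
  set σ := Equiv.swap i j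
  -- Move a nonzero entry of `r` to position `i`, complete by the identity, then move it back.
  refine ⟨((1 : Matrix n n K).updateRow i (r ∘ σ)).submatrix id σ, ?_, ?_⟩
  · rw [isUnit_iff_isUnit_det, det_permute', det_one_updateRow]
    exact ((Equiv.Perm.sign σ).isUnit.map (Int.castRingHom K)).mul
      (isUnit_iff_ne_zero.mpr (by simpa [σ] using hj))
  · ext k
    simp [σ]

theorem nontrivial_isUnit_row_eq {i j : n} (hij : i ≠ j) {r : n → K} (hr : r ≠ 0) :
    {C : Matrix n n K | IsUnit C ∧ C i = r}.Nontrivial := by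
  obtain ⟨C, hC, hCi⟩ := exists_isUnit_row_eq i hr
  refine ⟨C, ⟨hC, hCi⟩, C.updateRow j (C j + C i), ⟨?_, ?_⟩, ?_⟩
  · rw [isUnit_iff_isUnit_det, det_updateRow_add_self C hij.symm, ← isUnit_iff_isUnit_det]
    exact hC
  · rw [updateRow_ne hij, hCi]
  · intro h
    have hj : C j = C j + C i := by
      conv_lhs => rw [h]
      exact updateRow_self
    exact hr (hCi ▸ (add_eq_left.mp hj.symm))

end Matrix

theorem IsIndepSet.subset_of_forall_adj {V : Type*} {G : SimpleGraph V} {I S T : Set V}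
    (hI : IsIndepSet G I) (hT : T ⊆ I) (hadj : ∀ x ∉ S, ∃ y ∈ T, G.Adj x y) : I ⊆ S := by
  intro x hx
  by_contra hxS
  obtain ⟨y, hyT, hxy⟩ := hadj x hxS
  exact hI hx (hT hyT) hxy.ne hxy

section UnitaryCayley

variable {n : Type*} [Fintype n] [DecidableEq n]

theorem isIndepSet_unitaryCayley_row_eq_zero {R : Type*} [CommRing R] [Nontrivial R] (i : n) :
    IsIndepSet (unitaryCayley (Matrix n n R)) {A | ∀ j, A i j = 0} := by
  rintro A hA B hB - ⟨-, hAB⟩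
  exact Matrix.not_isUnit_of_row_eq_zero i (fun j => by simp [hA j, hB j]) hAB

theorem exists_unitaryCayley_adj_row_eq_zero {K : Type*} [Field K] {i j : n} (hij : i ≠ j)
    (M : Matrix n n K) {B : Matrix n n K} (hB : ¬∀ k, B i k = 0) :
    ∃ A, (∀ k, A i k = 0) ∧ A ≠ M ∧ (unitaryCayley (Matrix n n K)).Adj B A := by
  have hBi : B i ≠ 0 := fun h => hB (congrFun h)
  obtain ⟨C, ⟨hC, hCi⟩, hCM⟩ := (Matrix.nontrivial_isUnit_row_eq hij hBi).exists_ne (B - M)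
  refine ⟨B - C, fun k => by simp [hCi], fun h => hCM (by rw [← h, sub_sub_cancel]), ?_, ?_⟩
  · intro h
    exact hBi (by rw [← hCi, sub_eq_self.mp h.symm]; rfl)
  · rwa [sub_sub_cancel]

end UnitaryCayley

theorem stmt15 (F : Type*) [Field F] (n : ℕ) (hn : 2 ≤ n)
    (M : Matrix (Fin n) (Fin n) F) :
    (∀ I : Set (Matrix (Fin n) (Fin n) F),
        IsIndepSet (unitaryCayley (Matrix (Fin n) (Fin n) F)) I →
        {A : Matrix (Fin n) (Fin n) F | ∀ j, A ⟨0, by omega⟩ j = 0} \ {M} ⊆ I →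
        I ⊆ {A : Matrix (Fin n) (Fin n) F | ∀ j, A ⟨0, by omega⟩ j = 0}) ∧
      (∀ I : Set (Matrix (Fin n) (Fin n) F),
        IsMaxIndepSet (unitaryCayley (Matrix (Fin n) (Fin n) F)) I →
        {A : Matrix (Fin n) (Fin n) F | ∀ j, A ⟨0, by omega⟩ j = 0} \ {M} ⊆ I →
        I = {A : Matrix (Fin n) (Fin n) F | ∀ j, A ⟨0, by omega⟩ j = 0}) := by
  have h01 : (⟨0, by omega⟩ : Fin n) ≠ ⟨1, by omega⟩ := by simp [Fin.ext_iff]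
  have hcontained : ∀ I : Set (Matrix (Fin n) (Fin n) F),
      IsIndepSet (unitaryCayley (Matrix (Fin n) (Fin n) F)) I →
      {A : Matrix (Fin n) (Fin n) F | ∀ j, A ⟨0, by omega⟩ j = 0} \ {M} ⊆ I →
      I ⊆ {A : Matrix (Fin n) (Fin n) F | ∀ j, A ⟨0, by omega⟩ j = 0} :=
    fun I hI hsub => hI.subset_of_forall_adj hsub fun B hB => by
      obtain ⟨A, hA, hAM, hBA⟩ := exists_unitaryCayley_adj_row_eq_zero h01 M hB
      exact ⟨A, ⟨hA, hAM⟩, hBA⟩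
  exact ⟨hcontained, fun I hI hsub =>
    hI.2 _ (isIndepSet_unitaryCayley_row_eq_zero _) (hcontained I hI.1 hsub)⟩
end
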